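/- arXiv:2204.07742 — 2 statements merged into one kernel-verified Lean document; each statement's English description precedes it below -/
import Mathlib

section
/- Let p₁ ∈ (1/2, 1). For the noisy one-dimensional population defined in the context, the noisy population 0-1 risk R̃(b) = P(ỹ ≠ f_b(x)) of the threshold classifier f_b satisfies: R̃(b) = ( p₁(b+2) + (1−p₁)(−1−b) )/2 for b ∈ [−2,−1], R̃(b) = p₁/2 for b ∈ [−1,1], and R̃(b) = p₁/2 + (b−1)/2 for b ∈ [1,2]. Consequently R̃ attains its minimum over b ∈ [−2,2] uniquely at b = −2, with minimum value (1−p₁)/2, and the clean population risk of the corresponding classifier is P(y ≠ f_{−2}(x)) = 1/2. -/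
open MeasureTheory Set

/-- `x` uniform on `[-2,-1] ∪ [1,2]`: each interval carries mass `1/2`. -/
noncomputable def muX : Measure ℝ :=
  (2 : ENNReal)⁻¹ • (volume.restrict (Icc (-2 : ℝ) (-1)) + volume.restrict (Icc (1 : ℝ) 2))

/-- Bernoulli flip indicator: `true` (flip) with probability `p`. -/
noncomputable def bern (p : ℝ) : Measure Bool :=
  ENNReal.ofReal p • Measure.dirac true + ENNReal.ofReal (1 - p) • Measure.dirac false

/-- Clean label: `y = 1` if `x > 0`, `y = -1` otherwise. -/
noncomputable def cleanLabel (x : ℝ) : ℝ := if 0 < x then 1 else -1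

/-- Noisy label: the clean label is flipped exactly when `x ∈ [-2,-1]` and the
(independent, probability-`p₁`) flip indicator is `true`. -/
noncomputable def noisyLabel (q : ℝ × Bool) : ℝ :=
  if q.1 ∈ Icc (-2 : ℝ) (-1) ∧ q.2 = true then -cleanLabel q.1 else cleanLabel q.1

/-- Threshold classifier `f_b(z) = 1 - 2·1{z < b}`. -/
noncomputable def fthr (b z : ℝ) : ℝ := 1 - 2 * (if z < b then 1 else 0)

/-- Clean population 0-1 risk `R(b) = P(y ≠ f_b(x))`. -/
noncomputable def cleanRisk (b : ℝ) : ℝ :=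
  (muX {x : ℝ | cleanLabel x ≠ fthr b x}).toReal

/-- Noisy population 0-1 risk `R̃(b) = P(ỹ ≠ f_b(x))` under flip probability `p₁`. -/
noncomputable def noisyRisk (p₁ b : ℝ) : ℝ :=
  ((muX.prod (bern p₁)) {q : ℝ × Bool | noisyLabel q ≠ fthr b q.1}).toReal

/- ### Auxiliary lemmas -/

lemma muX_apply (T : Set ℝ) :
    muX T = 2⁻¹ * (volume (T ∩ Icc (-2 : ℝ) (-1)) + volume (T ∩ Icc (1 : ℝ) 2)) := by
  simp [muX, Measure.smul_apply, Measure.add_apply,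
    Measure.restrict_apply' measurableSet_Icc, smul_eq_mul, mul_add]

instance : IsFiniteMeasure muX := by
  constructor
  rw [muX_apply]
  simp only [univ_inter, Real.volume_Icc]
  finiteness

lemma prod_smul_dirac (μ : Measure ℝ) [SigmaFinite μ] (c : ENNReal) (hc : c ≠ ⊤) (y : Bool) :
    μ.prod (c • Measure.dirac y) = c • μ.prod (Measure.dirac y) := by
  haveI : IsFiniteMeasure (c • Measure.dirac y) := by
    constructor
    simp only [Measure.smul_apply, measure_univ, smul_eq_mul, mul_one]
    exact hc.lt_top
  refine Measure.prod_eq fun s t hs ht => ?_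
  simp [Measure.prod_prod, Measure.smul_apply, mul_left_comm]

lemma muX_prod_bern (p : ℝ) (S : Set (ℝ × Bool)) :
    (muX.prod (bern p)) S =
      ENNReal.ofReal p * muX ((fun x => (x, true)) ⁻¹' S)
      + ENNReal.ofReal (1 - p) * muX ((fun x => (x, false)) ⁻¹' S) := by
  rw [bern, Measure.prod_add, prod_smul_dirac _ _ ENNReal.ofReal_ne_top,
    prod_smul_dirac _ _ ENNReal.ofReal_ne_top, Measure.prod_dirac, Measure.prod_dirac]
  simp [Measure.smul_apply, (measurableEmbedding_prod_mk_right (true : Bool)).map_apply,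
    (measurableEmbedding_prod_mk_right (false : Bool)).map_apply, smul_eq_mul]

lemma slice_true_left (b : ℝ) :
    {x : ℝ | noisyLabel (x, true) ≠ fthr b x} ∩ Icc (-2 : ℝ) (-1)
      = Icc (-2 : ℝ) (-1) ∩ Iio b := by
  ext x
  simp only [mem_inter_iff, mem_setOf_eq, mem_Icc, mem_Iio, noisyLabel, cleanLabel, fthr]
  split_ifs <;> norm_num <;> simp_all [mem_Icc] <;> intros <;> try linarith

lemma slice_true_right (b : ℝ) :
    {x : ℝ | noisyLabel (x, true) ≠ fthr b x} ∩ Icc (1 : ℝ) 2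
      = Icc (1 : ℝ) 2 ∩ Iio b := by
  ext x
  simp only [mem_inter_iff, mem_setOf_eq, mem_Icc, mem_Iio, noisyLabel, cleanLabel, fthr]
  split_ifs <;> norm_num <;> simp_all [mem_Icc] <;> intros <;> try linarith

lemma slice_false_left (b : ℝ) :
    {x : ℝ | noisyLabel (x, false) ≠ fthr b x} ∩ Icc (-2 : ℝ) (-1)
      = Icc (-2 : ℝ) (-1) ∩ Ici b := by
  ext x
  simp only [mem_inter_iff, mem_setOf_eq, mem_Icc, mem_Ici, noisyLabel, cleanLabel, fthr]
  split_ifs <;> norm_num <;> simp_all [mem_Icc] <;> intros <;> try linarith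

lemma slice_false_right (b : ℝ) :
    {x : ℝ | noisyLabel (x, false) ≠ fthr b x} ∩ Icc (1 : ℝ) 2
      = Icc (1 : ℝ) 2 ∩ Iio b := by
  ext x
  simp only [mem_inter_iff, mem_setOf_eq, mem_Icc, mem_Iio, noisyLabel, cleanLabel, fthr]
  split_ifs <;> norm_num <;> simp_all [mem_Icc] <;> intros <;> try linarith

lemma volA1 (b : ℝ) (hb' : b ≤ -1) :
    volume (Icc (-2 : ℝ) (-1) ∩ Iio b) = ENNReal.ofReal (b + 2) := by
  have : Icc (-2 : ℝ) (-1) ∩ Iio b = Ico (-2 : ℝ) b := by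
    ext x; simp only [mem_inter_iff, mem_Icc, mem_Iio, mem_Ico]
    constructor
    · rintro ⟨⟨h1, _⟩, h3⟩; exact ⟨h1, h3⟩
    · rintro ⟨h1, h2⟩; exact ⟨⟨h1, by linarith⟩, h2⟩
  rw [this, Real.volume_Ico]; norm_num

lemma volA2 (b : ℝ) (hb : -1 ≤ b) :
    volume (Icc (-2 : ℝ) (-1) ∩ Iio b) = 1 := by
  rcases eq_or_lt_of_le hb with h | h
  · rw [← h, volA1 _ le_rfl]; norm_num
  · have : Icc (-2 : ℝ) (-1) ∩ Iio b = Icc (-2 : ℝ) (-1) := by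
      apply inter_eq_left.mpr
      intro x hx; exact lt_of_le_of_lt hx.2 h
    rw [this, Real.volume_Icc]; norm_num

lemma volB0 (b : ℝ) (hb : b ≤ 1) : volume (Icc (1 : ℝ) 2 ∩ Iio b) = 0 := by
  have : Icc (1 : ℝ) 2 ∩ Iio b = ∅ := by
    ext x; simp only [mem_inter_iff, mem_Icc, mem_Iio, mem_empty_iff_false, iff_false]
    rintro ⟨⟨h1, h2⟩, h3⟩; linarith
  simp [this]

lemma volB (b : ℝ) (hb2 : b ≤ 2) :
    volume (Icc (1 : ℝ) 2 ∩ Iio b) = ENNReal.ofReal (b - 1) := by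
  have : Icc (1 : ℝ) 2 ∩ Iio b = Ico (1 : ℝ) b := by
    ext x; simp only [mem_inter_iff, mem_Icc, mem_Iio, mem_Ico]
    constructor
    · rintro ⟨⟨h1, _⟩, h3⟩; exact ⟨h1, h3⟩
    · rintro ⟨h1, h2⟩; exact ⟨⟨h1, by linarith⟩, h2⟩
  rw [this, Real.volume_Ico]

lemma volC (b : ℝ) (hb : -2 ≤ b) :
    volume (Icc (-2 : ℝ) (-1) ∩ Ici b) = ENNReal.ofReal (-1 - b) := by
  have : Icc (-2 : ℝ) (-1) ∩ Ici b = Icc b (-1 : ℝ) := by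
    ext x; simp only [mem_inter_iff, mem_Icc, mem_Ici]
    constructor
    · rintro ⟨⟨_, h2⟩, h3⟩; exact ⟨h3, h2⟩
    · rintro ⟨h1, h2⟩; exact ⟨⟨by linarith, h2⟩, h1⟩
  rw [this, Real.volume_Icc]

lemma noisyRisk_eq (p b : ℝ) (hp0 : 0 ≤ p) (hp1 : p ≤ 1) :
    noisyRisk p b =
      (p * ((volume (Icc (-2 : ℝ) (-1) ∩ Iio b)).toReal
            + (volume (Icc (1 : ℝ) 2 ∩ Iio b)).toReal)
       + (1 - p) * ((volume (Icc (-2 : ℝ) (-1) ∩ Ici b)).toReal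
            + (volume (Icc (1 : ℝ) 2 ∩ Iio b)).toReal)) / 2 := by
  have ha : volume (Icc (-2 : ℝ) (-1) ∩ Iio b) ≠ ⊤ :=
    ((measure_mono inter_subset_left).trans_lt measure_Icc_lt_top).ne
  have hc : volume (Icc (1 : ℝ) 2 ∩ Iio b) ≠ ⊤ :=
    ((measure_mono inter_subset_left).trans_lt measure_Icc_lt_top).ne
  have hd : volume (Icc (-2 : ℝ) (-1) ∩ Ici b) ≠ ⊤ :=
    ((measure_mono inter_subset_left).trans_lt measure_Icc_lt_top).ne
  have h1 : ((fun x => (x, true)) ⁻¹' {q : ℝ × Bool | noisyLabel q ≠ fthr b q.1})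
      = {x : ℝ | noisyLabel (x, true) ≠ fthr b x} := rfl
  have h2 : ((fun x => (x, false)) ⁻¹' {q : ℝ × Bool | noisyLabel q ≠ fthr b q.1})
      = {x : ℝ | noisyLabel (x, false) ≠ fthr b x} := rfl
  rw [noisyRisk, muX_prod_bern, h1, h2, muX_apply, muX_apply,
    slice_true_left, slice_true_right, slice_false_left, slice_false_right]
  rw [ENNReal.toReal_add (by finiteness) (by finiteness), ENNReal.toReal_mul,
    ENNReal.toReal_mul, ENNReal.toReal_mul, ENNReal.toReal_mul,
    ENNReal.toReal_add ha hc, ENNReal.toReal_add hd hc,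
    ENNReal.toReal_ofReal hp0, ENNReal.toReal_ofReal (by linarith)]
  have h2inv : ((2 : ENNReal)⁻¹).toReal = (2 : ℝ)⁻¹ := by simp
  rw [h2inv]; ring

/-- **Noisy risk of the threshold classifier and its minimizer.**
For `p₁ ∈ (1/2,1)`: `R̃(b) = (p₁(b+2) + (1-p₁)(-1-b))/2` on `[-2,-1]`,
`R̃(b) = p₁/2` on `[-1,1]`, `R̃(b) = p₁/2 + (b-1)/2` on `[1,2]`; `R̃` attains its
minimum over `[-2,2]` uniquely at `b = -2` with value `(1-p₁)/2`, and the clean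
risk of that minimizer is `R(-2) = 1/2`. -/
theorem noisyRisk_formula_and_min (p₁ : ℝ) (hp₁ : p₁ ∈ Set.Ioo (1/2 : ℝ) 1) :
    (∀ b ∈ Icc (-2 : ℝ) (-1),
        noisyRisk p₁ b = (p₁ * (b + 2) + (1 - p₁) * (-1 - b)) / 2) ∧
    (∀ b ∈ Icc (-1 : ℝ) 1, noisyRisk p₁ b = p₁ / 2) ∧
    (∀ b ∈ Icc (1 : ℝ) 2, noisyRisk p₁ b = p₁ / 2 + (b - 1) / 2) ∧
    (∀ b ∈ Icc (-2 : ℝ) 2, b ≠ -2 → noisyRisk p₁ (-2) < noisyRisk p₁ b) ∧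
    noisyRisk p₁ (-2) = (1 - p₁) / 2 ∧
    cleanRisk (-2) = 1 / 2 := by
  obtain ⟨hplo, hphi⟩ := hp₁
  have hp0 : 0 ≤ p₁ := by linarith
  have hp1 : p₁ ≤ 1 := le_of_lt hphi
  have part1 : ∀ b ∈ Icc (-2 : ℝ) (-1),
      noisyRisk p₁ b = (p₁ * (b + 2) + (1 - p₁) * (-1 - b)) / 2 := by
    intro b hb
    rw [noisyRisk_eq _ _ hp0 hp1, volA1 b hb.2, volB0 b (by linarith [hb.2]),
      volC b hb.1, ENNReal.toReal_ofReal (by linarith [hb.1]),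
      ENNReal.toReal_ofReal (by linarith [hb.2])]
    simp
  have part2 : ∀ b ∈ Icc (-1 : ℝ) 1, noisyRisk p₁ b = p₁ / 2 := by
    intro b hb
    rw [noisyRisk_eq _ _ hp0 hp1, volA2 b hb.1, volB0 b hb.2,
      volC b (by linarith [hb.1]), ENNReal.ofReal_of_nonpos (by linarith [hb.1])]
    norm_num
  have part3 : ∀ b ∈ Icc (1 : ℝ) 2, noisyRisk p₁ b = p₁ / 2 + (b - 1) / 2 := by
    intro b hb
    rw [noisyRisk_eq _ _ hp0 hp1, volA2 b (by linarith [hb.1]), volB b hb.2,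
      volC b (by linarith [hb.1]), ENNReal.toReal_ofReal (by linarith [hb.1] : (0:ℝ) ≤ b - 1),
      ENNReal.ofReal_of_nonpos (by linarith [hb.1] : (-1:ℝ) - b ≤ 0)]
    norm_num; ring
  have part5 : noisyRisk p₁ (-2) = (1 - p₁) / 2 := by
    rw [part1 (-2) ⟨le_refl _, by norm_num⟩]; ring
  have part4 : ∀ b ∈ Icc (-2 : ℝ) 2, b ≠ -2 → noisyRisk p₁ (-2) < noisyRisk p₁ b := by
    intro b hb hne
    rw [part5]
    have hbl : -2 < b := lt_of_le_of_ne hb.1 (Ne.symm hne)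
    rcases le_or_gt b (-1) with h1 | h1
    · rw [part1 b ⟨hb.1, h1⟩]
      nlinarith [mul_pos (by linarith : (0:ℝ) < 2 * p₁ - 1) (by linarith : (0:ℝ) < b + 2)]
    · rcases le_or_gt b 1 with h2 | h2
      · rw [part2 b ⟨le_of_lt h1, h2⟩]; linarith
      · rw [part3 b ⟨le_of_lt h2, hb.2⟩]; linarith
  have part6 : cleanRisk (-2) = 1 / 2 := by
    have e1 : {x : ℝ | cleanLabel x ≠ fthr (-2) x} ∩ Icc (-2 : ℝ) (-1)
        = Icc (-2 : ℝ) (-1) := by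
      apply inter_eq_right.mpr
      intro x hx
      simp only [mem_Icc] at hx
      simp only [mem_setOf_eq, cleanLabel, fthr]
      rw [if_neg (by linarith : ¬ 0 < x), if_neg (by linarith : ¬ x < -2)]
      norm_num
    have e2 : {x : ℝ | cleanLabel x ≠ fthr (-2) x} ∩ Icc (1 : ℝ) 2 = ∅ := by
      ext x
      simp only [mem_inter_iff, mem_setOf_eq, mem_Icc, mem_empty_iff_false, iff_false,
        cleanLabel, fthr]
      rintro ⟨hne', h1, h2⟩
      apply hne'
      rw [if_pos (by linarith : (0:ℝ) < x), if_neg (by linarith : ¬ x < -2)]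
      norm_num
    rw [cleanRisk, muX_apply, e1, e2, Real.volume_Icc]
    norm_num
  exact ⟨part1, part2, part3, part4, part5, part6⟩
end

section
/- Let p₁ ∈ (1/2, 1), and let R(b) and R̃(b) be respectively the clean and noisy population 0-1 risks of the threshold classifier f_b under the distributions defined in the context. Then: (a) the function b ↦ max{R(b), R̃(b)} attains its minimum over b ∈ [−2,2] uniquely at b = −3/2, with minimum value 1/4, and the clean risk of the minimizer is R(−3/2) = 1/4 > 0; whereas (b) the set of minimizers over b ∈ [−2,2] of b ↦ (R(b) + R̃(b))/2 is exactly the interval [−1,1], and every such minimizer has clean risk R(b) = 0. Hence the worst-case (distributionally robust) objective selects a classifier with strictly positive clean population risk while the average objective selects only classifiers with zero clean population risk. -/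
open MeasureTheory Set

/-!
On `[-2,2]` both risks are affine in the overshoots `u = (-1 - b)⁺` and `v = (b - 1)⁺` of the
threshold beyond `[-1,1]`: `R = (u + v)/2` and, because the flipped labels on `[-2,-1]` are wrong
exactly where the clean ones are right, `R̃ = p/2 + ((1 - 2p)u + v)/2`. For `p > 1/2` the noisy
risk decreases in `u`, so the larger of the two risks exceeds `1/4` except at `u = 1/2`,
`v = 0`, i.e. `b = -3/2`. The average is `p/4 + ((1 - p)u + v)/2`, minimal exactly when
`u = v = 0`, i.e. `b ∈ [-1,1]`.
-/

instance (p : ℝ) : SFinite (bern p) := by unfold bern; infer_instance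

instance : IsProbabilityMeasure muX := by
  constructor
  simp only [muX, Measure.smul_apply, Measure.add_apply, Measure.restrict_apply_univ,
    Real.volume_Icc, smul_eq_mul]
  norm_num
  exact ENNReal.inv_mul_cancel two_ne_zero ENNReal.ofNat_ne_top

theorem setOf_forall_le_eq {α β : Type*} [Preorder β] {f : α → β} {S T : Set α} {m : β}
    (hTS : T ⊆ S) (hT : T.Nonempty) (hm : ∀ b ∈ S, m ≤ f b) (hle : ∀ b ∈ S, f b ≤ m ↔ b ∈ T) :
    {b | b ∈ S ∧ ∀ b' ∈ S, f b ≤ f b'} = T := by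
  obtain ⟨t, ht⟩ := hT
  ext b
  constructor
  · rintro ⟨hb, hmin⟩
    exact (hle b hb).1 ((hmin t (hTS ht)).trans ((hle t (hTS ht)).2 ht))
  · intro hb
    exact ⟨hTS hb, fun b' hb' => ((hle b (hTS hb)).2 hb).trans (hm b' hb')⟩

theorem prod_bern_apply {α : Type*} [MeasurableSpace α] (μ : Measure α) [SFinite μ] (p : ℝ)
    (S : Set (α × Bool)) :
    μ.prod (bern p) S =
      ENNReal.ofReal p * μ ((·, true) ⁻¹' S) + ENNReal.ofReal (1 - p) * μ ((·, false) ⁻¹' S) := by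
  simp only [bern, Measure.prod_add, Measure.prod_smul_right, Measure.prod_dirac,
    Measure.add_apply, Measure.smul_apply, smul_eq_mul,
    (measurableEmbedding_prod_mk_right _).map_apply]

theorem muX_real_apply (A : Set ℝ) :
    muX.real A = (volume.real (A ∩ Icc (-2) (-1)) + volume.real (A ∩ Icc 1 2)) / 2 := by
  have hfin (a b : ℝ) : volume (A ∩ Icc a b) ≠ ⊤ :=
    measure_ne_top_of_subset inter_subset_right measure_Icc_lt_top.ne
  simp only [Measure.real, muX, Measure.smul_apply, Measure.add_apply,
    Measure.restrict_apply' measurableSet_Icc, smul_eq_mul, ENNReal.toReal_mul,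
    ENNReal.toReal_add (hfin _ _) (hfin _ _), ENNReal.toReal_inv, ENNReal.toReal_ofNat]
  ring

def cleanErr (b : ℝ) : Set ℝ := {x | cleanLabel x ≠ fthr b x}

def flipErr (b : ℝ) : Set ℝ := {x | noisyLabel (x, true) ≠ fthr b x}

theorem cleanLabel_ne_fthr_iff {b x : ℝ} : cleanLabel x ≠ fthr b x ↔ (0 < x ↔ x < b) := by
  unfold cleanLabel fthr
  split_ifs <;> grind

theorem noisyLabel_false (x : ℝ) : noisyLabel (x, false) = cleanLabel x := by
  simp [noisyLabel]

theorem noisyLabel_true_ne_fthr_iff {b x : ℝ} (hx : x ∈ Icc (-2) (-1)) :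
    noisyLabel (x, true) ≠ fthr b x ↔ cleanLabel x = fthr b x := by
  have hx0 : ¬ 0 < x := by linarith [hx.2]
  unfold noisyLabel cleanLabel fthr
  split_ifs <;> grind

theorem noisyLabel_true_of_notMem {x : ℝ} (hx : x ∉ Icc (-2) (-1)) :
    noisyLabel (x, true) = cleanLabel x := by
  simp [noisyLabel, hx]

theorem cleanErr_inter_Icc_neg {b : ℝ} (hb : -2 ≤ b) :
    cleanErr b ∩ Icc (-2) (-1) = Icc b (-1) := by
  ext x
  simp only [cleanErr, mem_inter_iff, mem_ofPred_eq, cleanLabel_ne_fthr_iff, mem_Icc]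
  constructor
  · rintro ⟨hx, -, hx1⟩
    exact ⟨not_lt.1 fun hxb => by linarith [hx.2 hxb], hx1⟩
  · rintro ⟨hbx, hx1⟩
    exact ⟨⟨fun h => by linarith, fun h => by linarith⟩, by linarith, hx1⟩

theorem cleanErr_inter_Icc_pos {b : ℝ} (hb : b ≤ 2) :
    cleanErr b ∩ Icc 1 2 = Ico 1 b := by
  ext x
  simp only [cleanErr, mem_inter_iff, mem_ofPred_eq, cleanLabel_ne_fthr_iff, mem_Icc, mem_Ico]
  constructor
  · rintro ⟨hx, hx1, -⟩
    exact ⟨hx1, hx.1 (by linarith)⟩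
  · rintro ⟨hx1, hxb⟩
    exact ⟨⟨fun _ => hxb, fun _ => by linarith⟩, hx1, by linarith⟩

theorem flipErr_inter_Icc_neg (b : ℝ) :
    flipErr b ∩ Icc (-2) (-1) = Icc (-2) (-1) \ (cleanErr b ∩ Icc (-2) (-1)) := by
  ext x
  simp only [flipErr, cleanErr, mem_inter_iff, mem_sdiff, mem_ofPred_eq]
  constructor
  · rintro ⟨h, hx⟩
    exact ⟨hx, fun h' => h'.1 ((noisyLabel_true_ne_fthr_iff hx).1 h)⟩
  · rintro ⟨hx, h⟩
    exact ⟨(noisyLabel_true_ne_fthr_iff hx).2 (not_not.1 fun h' => h ⟨h', hx⟩), hx⟩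

theorem flipErr_inter_Icc_pos (b : ℝ) :
    flipErr b ∩ Icc 1 2 = cleanErr b ∩ Icc 1 2 := by
  ext x
  simp only [flipErr, cleanErr, mem_inter_iff, mem_ofPred_eq]
  refine and_congr_left fun hx => ?_
  rw [noisyLabel_true_of_notMem fun h => by linarith [h.2, hx.1]]

theorem cleanRisk_eq {b : ℝ} (hb : b ∈ Icc (-2) 2) :
    cleanRisk b = (max (-1 - b) 0 + max (b - 1) 0) / 2 := by
  change muX.real (cleanErr b) = _
  rw [muX_real_apply, cleanErr_inter_Icc_neg hb.1, cleanErr_inter_Icc_pos hb.2,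
    Real.volume_real_Icc, Real.volume_real_Ico]

theorem muX_real_flipErr {b : ℝ} (hb : b ∈ Icc (-2) 2) :
    muX.real (flipErr b) = (1 - max (-1 - b) 0 + max (b - 1) 0) / 2 := by
  rw [muX_real_apply, flipErr_inter_Icc_neg, flipErr_inter_Icc_pos, cleanErr_inter_Icc_neg hb.1,
    cleanErr_inter_Icc_pos hb.2,
    measureReal_sdiff (Icc_subset_Icc_left hb.1) measurableSet_Icc measure_Icc_lt_top.ne,
    Real.volume_real_Icc, Real.volume_real_Icc, Real.volume_real_Ico]
  norm_num

theorem noisyRisk_eq_mix {p : ℝ} (hp : p ∈ Icc 0 1) (b : ℝ) :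
    noisyRisk p b = p * muX.real (flipErr b) + (1 - p) * cleanRisk b := by
  rw [noisyRisk, prod_bern_apply, ENNReal.toReal_add (by finiteness) (by finiteness),
    ENNReal.toReal_mul, ENNReal.toReal_mul, ENNReal.toReal_ofReal hp.1,
    ENNReal.toReal_ofReal (sub_nonneg.2 hp.2)]
  simp only [preimage_ofPred_eq, noisyLabel_false]
  rfl

theorem noisyRisk_eq_s9 {p b : ℝ} (hp : p ∈ Icc 0 1) (hb : b ∈ Icc (-2) 2) :
    noisyRisk p b = p / 2 + ((1 - 2 * p) * max (-1 - b) 0 + max (b - 1) 0) / 2 := by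
  rw [noisyRisk_eq_mix hp, muX_real_flipErr hb, cleanRisk_eq hb]
  ring

theorem quarter_lt_max_cleanRisk_noisyRisk {p b : ℝ} (hp : p ∈ Ioc (1 / 2) 1)
    (hb : b ∈ Icc (-2) 2) (hne : b ≠ -3 / 2) :
    1 / 4 < max (cleanRisk b) (noisyRisk p b) := by
  rw [cleanRisk_eq hb, noisyRisk_eq_s9 ⟨by linarith [hp.1], hp.2⟩ hb, lt_max_iff]
  have hv : 0 ≤ max (b - 1) 0 := le_max_right _ _
  rcases hne.lt_or_gt with h | h
  · left
    linarith [le_max_left (-1 - b) 0]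
  · right
    have hu : max (-1 - b) 0 < 1 / 2 := max_lt (by linarith) (by norm_num)
    nlinarith [hp.1]

theorem average_risk_eq {p b : ℝ} (hp : p ∈ Icc 0 1) (hb : b ∈ Icc (-2) 2) :
    (cleanRisk b + noisyRisk p b) / 2 = p / 4 + ((1 - p) * max (-1 - b) 0 + max (b - 1) 0) / 2 := by
  rw [cleanRisk_eq hb, noisyRisk_eq_s9 hp hb]
  ring

theorem le_average_risk {p b : ℝ} (hp : p ∈ Icc 0 1) (hb : b ∈ Icc (-2) 2) :
    p / 4 ≤ (cleanRisk b + noisyRisk p b) / 2 := by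
  rw [average_risk_eq hp hb]
  have := mul_nonneg (sub_nonneg.2 hp.2) (le_max_right (-1 - b) 0)
  linarith [le_max_right (b - 1) 0]

theorem average_risk_le_iff {p b : ℝ} (hp : p ∈ Ico 0 1) (hb : b ∈ Icc (-2) 2) :
    (cleanRisk b + noisyRisk p b) / 2 ≤ p / 4 ↔ b ∈ Icc (-1) 1 := by
  rw [average_risk_eq ⟨hp.1, hp.2.le⟩ hb]
  have hu := le_max_left (-1 - b) 0
  have hv := le_max_left (b - 1) 0
  constructor
  · intro h
    constructor <;> nlinarith [hp.2, le_max_right (-1 - b) 0, le_max_right (b - 1) 0]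
  · rintro ⟨h1, h2⟩
    rw [max_eq_right (by linarith), max_eq_right (by linarith)]
    simp

theorem cleanRisk_eq_zero {b : ℝ} (hb : b ∈ Icc (-1) 1) : cleanRisk b = 0 := by
  rw [cleanRisk_eq ⟨by linarith [hb.1], by linarith [hb.2]⟩, max_eq_right (by linarith [hb.1]),
    max_eq_right (by linarith [hb.2])]
  simp

/-- **Worst-case vs. average objective for the two-client example.**
For `p₁ ∈ (1/2,1)`:
(a) `b ↦ max{R(b), R̃(b)}` attains its minimum over `[-2,2]` uniquely at `b = -3/2`
with value `1/4`, and the clean risk there is `R(-3/2) = 1/4 > 0`;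
(b) the minimizers over `[-2,2]` of `b ↦ (R(b)+R̃(b))/2` form exactly `[-1,1]`, and
every such minimizer has zero clean risk. -/
theorem worst_case_vs_average (p₁ : ℝ) (hp₁ : p₁ ∈ Set.Ioo (1/2 : ℝ) 1) :
    (max (cleanRisk (-3/2)) (noisyRisk p₁ (-3/2)) = 1/4) ∧
    (∀ b ∈ Icc (-2 : ℝ) 2, b ≠ -3/2 →
        max (cleanRisk (-3/2)) (noisyRisk p₁ (-3/2))
          < max (cleanRisk b) (noisyRisk p₁ b)) ∧
    (cleanRisk (-3/2) = 1/4 ∧ (0 : ℝ) < cleanRisk (-3/2)) ∧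
    ({b : ℝ | b ∈ Icc (-2 : ℝ) 2 ∧ ∀ b' ∈ Icc (-2 : ℝ) 2,
        (cleanRisk b + noisyRisk p₁ b) / 2 ≤ (cleanRisk b' + noisyRisk p₁ b') / 2}
      = Icc (-1 : ℝ) 1) ∧
    (∀ b ∈ Icc (-1 : ℝ) 1, cleanRisk b = 0) := by
  have hp : p₁ ∈ Icc 0 1 := ⟨by linarith [hp₁.1], hp₁.2.le⟩
  have hclean : cleanRisk (-3/2) = 1/4 := by
    rw [cleanRisk_eq (by norm_num)]; norm_num
  have hnoisy : noisyRisk p₁ (-3/2) = 1/4 := by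
    rw [noisyRisk_eq_s9 hp (by norm_num)]; norm_num; ring
  have hmax : max (cleanRisk (-3/2)) (noisyRisk p₁ (-3/2)) = 1/4 := by
    rw [hclean, hnoisy, max_self]
  refine ⟨hmax, fun b hb hne => ?_, ⟨hclean, by rw [hclean]; norm_num⟩, ?_,
    fun b hb => cleanRisk_eq_zero hb⟩
  · rw [hmax]
    exact quarter_lt_max_cleanRisk_noisyRisk ⟨hp₁.1, hp₁.2.le⟩ hb hne
  · exact setOf_forall_le_eq (Icc_subset_Icc (by norm_num) (by norm_num))
      (nonempty_Icc.2 (by norm_num)) (fun b hb => le_average_risk hp hb)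
      (fun b hb => average_risk_le_iff ⟨hp.1, hp₁.2⟩ hb)
end
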